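/- arXiv:1110.2047 — 5 statements merged into one kernel-verified Lean document; each statement's English description precedes it below -/
import Mathlib

section
/- Let g and f be formal power series over ℂ such that g is invertible (constant term g₀ ≠ 0) and f is a delta series (f₀ = 0 and f₁ ≠ 0), and let (s_n)_{n≥0} be the Sheffer sequence for the pair (g, f), i.e., the unique sequence of polynomials satisfying ⟨g·f^k | s_n⟩ = n!·δ_{n,k} for all n, k ≥ 0. Then for every n ≥ 0, applying the operator f to s_{n+1} yields (n+1)·s_n; that is, ∑_{j≥0} f_j · s_{n+1}^{(j)}(x) = (n+1)·s_n(x), where f = ∑_{j≥0} f_j t^j and s^{(j)} denotes the j-th derivative (in umbral notation, (1/f(t))·s_n(x) = s_{n+1}(x)/(n+1)). -/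
/-!
Multiplying a series by `t` is adjoint, for the pairing, to differentiating the polynomial;
together with linearity this gives `⟨h | f·p⟩ = ⟨h f | p⟩`. Hence `f·s_{n+1} - (n+1) s_n` pairs
to zero with every `g f^k`. Writing `f = t u` with `u(0) = f₁`, the series `g f^k = t^k g u^k`
pairs with a polynomial of degree `k` to a nonzero multiple of its leading coefficient, so a
polynomial orthogonal to all `g f^k` vanishes.
-/

open Polynomial

/-- The umbral pairing `⟨h | p⟩ = ∑_j j! · h_j · p_j` between a formal power series and a
polynomial (a finite sum over the support of `p`). -/
noncomputable def umbralPair (h : PowerSeries ℂ) (p : Polynomial ℂ) : ℂ :=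
  ∑ j ∈ p.support, (j.factorial : ℂ) * (PowerSeries.coeff j h) * p.coeff j

/-- The action of a formal power series `h = ∑ h_j t^j` on a polynomial `p`:
`h · p = ∑_j h_j · p^{(j)}` (the sum is finite since high derivatives vanish). -/
noncomputable def umbralAct (h : PowerSeries ℂ) (p : Polynomial ℂ) : Polynomial ℂ :=
  ∑ j ∈ Finset.range (p.natDegree + 1),
    (PowerSeries.coeff j h) • ((fun q : Polynomial ℂ => Polynomial.derivative q)^[j] p)

open Finset

noncomputable def umbralPairₗ (h : PowerSeries ℂ) : ℂ[X] →ₗ[ℂ] ℂ :=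
  lsum fun j => (j.factorial * PowerSeries.coeff j h : ℂ) • LinearMap.id

theorem umbralPairₗ_apply (h : PowerSeries ℂ) (p : ℂ[X]) :
    umbralPairₗ h p = umbralPair h p := by
  simp [umbralPairₗ, umbralPair, Polynomial.sum_def]

theorem umbralPair_eq_sum_range (h : PowerSeries ℂ) {p : ℂ[X]} {N : ℕ} (hN : p.natDegree < N) :
    umbralPair h p = ∑ j ∈ range N, (j.factorial : ℂ) * PowerSeries.coeff j h * p.coeff j := by
  refine sum_subset (fun j hj => mem_range.2 ((le_natDegree_of_mem_supp j hj).trans_lt hN))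
    fun j _ hj => ?_
  rw [notMem_support_iff.1 hj, mul_zero]

theorem umbralPair_congr_left {h h' : PowerSeries ℂ} {p : ℂ[X]}
    (hh : ∀ j ≤ p.natDegree, PowerSeries.coeff j h = PowerSeries.coeff j h') :
    umbralPair h p = umbralPair h' p :=
  sum_congr rfl fun j hj => by rw [hh j (le_natDegree_of_mem_supp j hj)]

theorem umbralPair_sum_smul_left {ι : Type*} (s : Finset ι) (c : ι → ℂ) (h : ι → PowerSeries ℂ)
    (p : ℂ[X]) : umbralPair (∑ i ∈ s, c i • h i) p = ∑ i ∈ s, c i * umbralPair (h i) p := by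
  simp only [umbralPair, map_sum, map_smul, smul_eq_mul, mul_sum, sum_mul]
  rw [sum_comm]
  exact sum_congr rfl fun _ _ => sum_congr rfl fun _ _ => by ring

theorem umbralPair_derivative (h : PowerSeries ℂ) (p : ℂ[X]) :
    umbralPair h (derivative p) = umbralPair (h * PowerSeries.X) p := by
  have hp : (derivative p).natDegree < p.natDegree + 1 :=
    (natDegree_derivative_le p).trans_lt (by omega)
  rw [umbralPair_eq_sum_range h hp,
    umbralPair_eq_sum_range _ (by omega : p.natDegree < p.natDegree + 2), sum_range_succ' _ (_ + 1)]
  simp only [Polynomial.coeff_derivative, PowerSeries.coeff_succ_mul_X,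
    PowerSeries.coeff_zero_mul_X, mul_zero, zero_mul, add_zero, Nat.factorial_succ]
  push_cast
  exact sum_congr rfl fun _ _ => by ring

theorem umbralPair_iterate_derivative (h : PowerSeries ℂ) (p : ℂ[X]) (j : ℕ) :
    umbralPair h (derivative^[j] p) = umbralPair (h * PowerSeries.X ^ j) p := by
  induction j generalizing h with
  | zero => simp
  | succ j ih =>
    rw [Function.iterate_succ_apply', umbralPair_derivative, ih, pow_succ', mul_assoc]

theorem umbralAct_eq_sum_range (f : PowerSeries ℂ) {p : ℂ[X]} {N : ℕ} (hN : p.natDegree < N) :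
    umbralAct f p = ∑ j ∈ range N, PowerSeries.coeff j f • derivative^[j] p := by
  refine sum_subset (fun j hj => mem_range.2 (by rw [mem_range] at hj; omega))
    fun j _ hj => ?_
  rw [iterate_derivative_eq_zero (by rw [mem_range] at hj; omega), smul_zero]

theorem coeff_sum_range_smul_mul_X_pow (h f : PowerSeries ℂ) {m N : ℕ} (hm : m < N) :
    PowerSeries.coeff m (∑ j ∈ range N, PowerSeries.coeff j f • (h * PowerSeries.X ^ j)) =
      PowerSeries.coeff m (h * f) := by
  rw [mul_comm, PowerSeries.coeff_mul, Nat.sum_antidiagonal_eq_sum_range_succ_mk]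
  simp only [map_sum, map_smul, PowerSeries.coeff_mul_X_pow', smul_eq_mul, mul_ite, mul_zero]
  rw [← sum_filter]
  congr 1
  ext j
  simp only [mem_filter, mem_range]
  omega

theorem umbralPair_umbralAct (h f : PowerSeries ℂ) (p : ℂ[X]) :
    umbralPair h (umbralAct f p) = umbralPair (h * f) p := by
  rw [umbralAct_eq_sum_range f (Nat.lt_succ_self p.natDegree), ← umbralPairₗ_apply, map_sum]
  simp only [map_smul, umbralPairₗ_apply, umbralPair_iterate_derivative, smul_eq_mul]
  rw [← umbralPair_sum_smul_left]
  exact umbralPair_congr_left fun j hj => coeff_sum_range_smul_mul_X_pow h f (Nat.lt_succ_of_le hj)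

theorem umbralPair_X_pow_mul (u : PowerSeries ℂ) {p : ℂ[X]} {n : ℕ} (hp : p.natDegree ≤ n) :
    umbralPair (PowerSeries.X ^ n * u) p =
      n.factorial * PowerSeries.constantCoeff u * p.coeff n := by
  rw [umbralPair_eq_sum_range _ (Nat.lt_succ_of_le hp), sum_range_succ,
    sum_eq_zero fun j hj => ?_]
  · simp [PowerSeries.coeff_X_pow_mul']
  · simp [PowerSeries.coeff_X_pow_mul', (mem_range.1 hj).not_ge]

theorem eq_zero_of_forall_umbralPair_mul_pow_eq_zero {g f : PowerSeries ℂ}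
    (hg : PowerSeries.coeff 0 g ≠ 0) (hf0 : PowerSeries.coeff 0 f = 0)
    (hf1 : PowerSeries.coeff 1 f ≠ 0) {p : ℂ[X]} (hp : ∀ k, umbralPair (g * f ^ k) p = 0) :
    p = 0 := by
  rw [PowerSeries.coeff_zero_eq_constantCoeff_apply] at hf0
  obtain ⟨u, rfl⟩ := PowerSeries.X_dvd_iff.2 hf0
  rw [PowerSeries.coeff_succ_X_mul] at hf1
  by_contra hp0
  have key := hp p.natDegree
  rw [mul_pow, mul_left_comm, umbralPair_X_pow_mul _ le_rfl] at key
  simp only [map_mul, map_pow, ← PowerSeries.coeff_zero_eq_constantCoeff_apply] at key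
  have hfact : (p.natDegree.factorial : ℂ) ≠ 0 := Nat.cast_ne_zero.2 p.natDegree.factorial_ne_zero
  exact mul_ne_zero (mul_ne_zero hfact (mul_ne_zero hg (pow_ne_zero _ hf1)))
    (leadingCoeff_ne_zero.2 hp0) key

/-- If `(s_n)` is the Sheffer sequence for the pair `(g, f)` (with `g` invertible and `f` a
delta series), then applying the operator `f` to `s_{n+1}` yields `(n+1) · s_n`. -/
theorem sheffer_delta_lowers (g f : PowerSeries ℂ)
    (hg : PowerSeries.coeff 0 g ≠ 0)
    (hf0 : PowerSeries.coeff 0 f = 0) (hf1 : PowerSeries.coeff 1 f ≠ 0)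
    (s : ℕ → Polynomial ℂ)
    (hs : ∀ n k : ℕ, umbralPair (g * f ^ k) (s n) =
      (n.factorial : ℂ) * (if n = k then 1 else 0)) :
    ∀ n : ℕ, umbralAct f (s (n + 1)) = ((n : ℂ) + 1) • s n := by
  intro n
  rw [← sub_eq_zero]
  refine eq_zero_of_forall_umbralPair_mul_pow_eq_zero hg hf0 hf1 fun k => ?_
  have hdual : umbralPair (g * f ^ k) (umbralAct f (s (n + 1))) =
      umbralPair (g * f ^ (k + 1)) (s (n + 1)) := by
    rw [umbralPair_umbralAct, mul_assoc, ← pow_succ]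
  simp only [← umbralPairₗ_apply, map_sub, map_smul, smul_eq_mul]
  rw [umbralPairₗ_apply, umbralPairₗ_apply, hdual, hs, hs]
  rcases eq_or_ne n k with rfl | hnk
  · simp [Nat.factorial_succ]
  · simp [hnk]
end

section
/- For every integer n ≥ 1 and every real number c, ∫_0^c Y_{n,β}^{(v)}(u;k,a,b) du = (Y_{n+1,β}^{(v)}(c;k,a,b) − Y_{n+1,β}^{(v)}(0;k,a,b))/(n+1), where the ℂ-valued polynomial function u ↦ Y_{n,β}^{(v)}(u;k,a,b) is integrated over the real interval from 0 to c. -/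
/-! Differentiate the defining identity coefficientwise in `x`. The factors
`(β^b e^t − a^b)^v` and `(2^{1−k} t^k)^v` do not involve `x` and `∂ₓ e^{xt} = t e^{xt}`, so after
cancelling the nonzero factor `(β^b e^t − a^b)^v` one gets `∑ Y'ₙ tⁿ/n! = t ∑ Yₙ tⁿ/n!`, i.e.
`Y'ₙ₊₁ = (n + 1) Yₙ`. The integral formula is then the fundamental theorem of calculus. -/

open Polynomial

/-- The exponential generating series `e^{xt} = ∑_{n≥0} xⁿ tⁿ/n!` as a formal power series
in `t` with coefficients in `ℂ[x]`. -/
noncomputable def expX : PowerSeries (Polynomial ℂ) :=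
  PowerSeries.mk fun n => (n.factorial : ℂ)⁻¹ • (Polynomial.X : Polynomial ℂ) ^ n

/-- The exponential generating series `∑_{n≥0} Y_n tⁿ/n!` of a family of polynomials. -/
noncomputable def egf (Y : ℕ → Polynomial ℂ) : PowerSeries (Polynomial ℂ) :=
  PowerSeries.mk fun n => (n.factorial : ℂ)⁻¹ • Y n

/-- The defining identity for the unified Apostol-type polynomials with general constants:
`(B·e^t − A)^v · ∑_{n≥0} Y_n tⁿ/n! = (2^{1−k} t^k)^v · e^{xt}` as formal power series in `t`
over `ℂ[x]`. -/
def ApostolFamilyC (k v : ℕ) (B A : ℂ) (Y : ℕ → Polynomial ℂ) : Prop :=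
  (PowerSeries.C (Polynomial.C B) * PowerSeries.exp (Polynomial ℂ)
      - PowerSeries.C (Polynomial.C A)) ^ v * egf Y
    = (PowerSeries.C (Polynomial.C ((2 : ℂ) ^ ((1 : ℤ) - (k : ℤ)))) *
        PowerSeries.X ^ k) ^ v * expX

/-- `Y` is the family of unified Apostol-type polynomials `Y_{n,β}^{(v)}(x;k,a,b)`:
here `β^b = exp(b·Log β)` is the principal complex power and `a^b` the real power. -/
def ApostolFamily (k v : ℕ) (a b : ℝ) (β : ℂ) (Y : ℕ → Polynomial ℂ) : Prop :=
  ApostolFamilyC k v (β ^ (b : ℂ)) (((a ^ b : ℝ) : ℂ)) Y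

namespace PowerSeries

variable {R : Type*} [CommSemiring R]

noncomputable def derivativeCoeff (f : PowerSeries R[X]) : PowerSeries R[X] :=
  mk fun n => Polynomial.derivative (PowerSeries.coeff n f)

@[simp]
lemma coeff_derivativeCoeff (f : PowerSeries R[X]) (n : ℕ) :
    PowerSeries.coeff n (derivativeCoeff f) = Polynomial.derivative (PowerSeries.coeff n f) :=
  coeff_mk _ _

lemma derivativeCoeff_map_C_mul (g : PowerSeries R) (f : PowerSeries R[X]) :
    derivativeCoeff (map Polynomial.C g * f) = map Polynomial.C g * derivativeCoeff f := by
  refine ext fun n => ?_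
  simp only [coeff_derivativeCoeff, coeff_mul, Polynomial.derivative_sum, coeff_map,
    Polynomial.derivative_mul, Polynomial.derivative_C, zero_mul, zero_add]

end PowerSeries

open PowerSeries (derivativeCoeff)

lemma egf_injective : Function.Injective egf := by
  intro Y Z h
  funext n
  have hn := congrArg (PowerSeries.coeff n) h
  simp only [egf, PowerSeries.coeff_mk] at hn
  exact smul_right_injective _ (inv_ne_zero (Nat.cast_ne_zero.2 n.factorial_ne_zero)) hn

lemma X_mul_egf (Y : ℕ → ℂ[X]) : PowerSeries.X * egf Y = egf fun n => (n : ℂ) • Y (n - 1) := by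
  refine PowerSeries.ext fun n => ?_
  rcases n with _ | m
  · simp [egf]
  · rw [PowerSeries.coeff_succ_X_mul]
    simp only [egf, PowerSeries.coeff_mk, smul_smul, Nat.add_sub_cancel]
    congr 1
    rw [Nat.factorial_succ]
    push_cast
    have : (m.factorial : ℂ) ≠ 0 := Nat.cast_ne_zero.2 m.factorial_ne_zero
    field_simp

lemma derivativeCoeff_egf (Y : ℕ → ℂ[X]) :
    derivativeCoeff (egf Y) = egf fun n => derivative (Y n) := by
  refine PowerSeries.ext fun n => ?_
  simp [egf]

lemma derivativeCoeff_expX : derivativeCoeff expX = PowerSeries.X * expX := by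
  change derivativeCoeff (egf (X ^ ·)) = PowerSeries.X * egf (X ^ ·)
  rw [derivativeCoeff_egf, X_mul_egf]
  congr 1
  funext n
  rcases n with _ | m
  · simp
  · simp [Polynomial.smul_eq_C_mul]

lemma derivative_succ_of_map_C_mul_egf {g r : PowerSeries ℂ} (hg : g ≠ 0) {Y : ℕ → ℂ[X]}
    (hY : PowerSeries.map C g * egf Y = PowerSeries.map C r * expX) (n : ℕ) :
    derivative (Y (n + 1)) = ((n : ℂ) + 1) • Y n := by
  have hY' : PowerSeries.map C g * egf (fun m => derivative (Y m))
      = PowerSeries.map C g * (PowerSeries.X * egf Y) := by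
    calc PowerSeries.map C g * egf (fun m => derivative (Y m))
        = derivativeCoeff (PowerSeries.map C r * expX) := by
          rw [← hY, PowerSeries.derivativeCoeff_map_C_mul, derivativeCoeff_egf]
      _ = PowerSeries.X * (PowerSeries.map C g * egf Y) := by
          rw [PowerSeries.derivativeCoeff_map_C_mul, derivativeCoeff_expX, hY, mul_left_comm]
      _ = PowerSeries.map C g * (PowerSeries.X * egf Y) := mul_left_comm _ _ _
  have hmap : PowerSeries.map C g ≠ 0 :=
    (map_ne_zero_iff _ (PowerSeries.map_injective _ C_injective)).2 hg
  rw [X_mul_egf] at hY'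
  simpa using congrFun (egf_injective (mul_left_cancel₀ hmap hY')) (n + 1)

lemma derivative_succ_of_apostolFamilyC {k v : ℕ} {B A : ℂ} (hB : B ≠ 0) {Y : ℕ → ℂ[X]}
    (hY : ApostolFamilyC k v B A Y) (n : ℕ) :
    derivative (Y (n + 1)) = ((n : ℂ) + 1) • Y n := by
  have hg : (PowerSeries.C B * PowerSeries.exp ℂ - PowerSeries.C A) ^ v ≠ 0 := by
    refine pow_ne_zero _ fun h => hB ?_
    simpa [PowerSeries.coeff_exp] using congrArg (PowerSeries.coeff 1) h
  refine derivative_succ_of_map_C_mul_egf hg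
    (r := (PowerSeries.C ((2 : ℂ) ^ ((1 : ℤ) - k)) * PowerSeries.X ^ k) ^ v) ?_ n
  simpa [ApostolFamilyC, PowerSeries.map_exp] using hY

lemma integral_eval_derivative (P : ℂ[X]) (c d : ℝ) :
    ∫ u in c..d, (derivative P).eval (u : ℂ) = P.eval (d : ℂ) - P.eval (c : ℂ) := by
  refine intervalIntegral.integral_eq_sub_of_hasDerivAt
    (fun u _ => (P.hasDerivAt (u : ℂ)).comp_ofReal) ?_
  exact ((derivative P).continuous.comp Complex.continuous_ofReal).intervalIntegrable _ _

theorem apostol_integral_general (k v : ℕ) (a b : ℝ) (β : ℂ)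
    (hβ : β ≠ 0)
    (Y : ℕ → Polynomial ℂ) (hY : ApostolFamily k v a b β Y)
    (n : ℕ) (c : ℝ) :
    ∫ u in (0:ℝ)..c, (Y n).eval (u : ℂ)
      = ((Y (n + 1)).eval (c : ℂ) - (Y (n + 1)).eval 0) / ((n : ℂ) + 1) := by
  have hB : β ^ (b : ℂ) ≠ 0 := fun h => hβ ((Complex.cpow_eq_zero_iff _ _).1 h).1
  have hn : ((n : ℂ) + 1) ≠ 0 := Nat.cast_add_one_ne_zero n
  have hYn : Y n = ((n : ℂ) + 1)⁻¹ • derivative (Y (n + 1)) := by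
    rw [derivative_succ_of_apostolFamilyC hB hY, smul_smul, inv_mul_cancel₀ hn, one_smul]
  simp_rw [hYn, eval_smul, smul_eq_mul, intervalIntegral.integral_const_mul,
    integral_eval_derivative, Complex.ofReal_zero]
  rw [div_eq_inv_mul]

/-- Integral formula: `∫_0^c Y_{n,β}^{(v)}(u;k,a,b) du
  = (Y_{n+1,β}^{(v)}(c;k,a,b) − Y_{n+1,β}^{(v)}(0;k,a,b))/(n+1)` for `n ≥ 1`. -/
theorem apostol_integral (k v : ℕ) (a b : ℝ) (β : ℂ)
    (ha : 0 < a) (hb : 0 < b) (hβ : β ≠ 0)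
    (Y : ℕ → Polynomial ℂ) (hY : ApostolFamily k v a b β Y)
    (n : ℕ) (hn : 1 ≤ n) (c : ℝ) :
    ∫ u in (0:ℝ)..c, (Y n).eval (u : ℂ)
      = ((Y (n + 1)).eval (c : ℂ) - (Y (n + 1)).eval 0) / ((n : ℂ) + 1) :=
  apostol_integral_general k v a b β hβ Y hY n c
end

section
/- For all integers j ≥ 1 and n ≥ k: ∑_{m=0}^{j} C(j,m)·(−1)^{j−m}·a^{b(j−m)}·β^{bm}·Y_{n,β}(m;k,a,b) = (β^{b(j−1)}·k!/2^{k−1})·C(n,k)·∑_{l=0}^{j−1} ((j−1)!/(j−l−1)!)·(1 − a^b/β^b)^{j−l−1}·S(n−k,l), where Y_{n,β}(m;k,a,b) denotes the evaluation of the polynomial Y_{n,β}(x;k,a,b) at x = m, and β^{bm} = (β^b)^m. -/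
open Polynomial

/-- The Stirling numbers of the second kind, characterized by
`l!·S(p,l) = ∑_{i=0}^{l} (−1)^{l−i}·C(l,i)·i^p`. -/
noncomputable def stirling2 (p l : ℕ) : ℂ :=
  (l.factorial : ℂ)⁻¹ *
    ∑ i ∈ Finset.range (l + 1), (-1 : ℂ) ^ (l - i) * (l.choose i : ℂ) * (i : ℂ) ^ p

/-!
Evaluating the defining identity at `x = m` turns `e^{xt}` into `(e^t)^m`. Hence, with
`G = β^b e^t − a^b`, multiplying the binomial combination of the `∑ Y_n(m) tⁿ/n!` by `G` gives
`2^{1-k} t^k G^j`, and cancelling one factor `G` in the domain `ℂ⟦t⟧` leaves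
`2^{1-k} t^k G^{j-1}`. Finally `G = β^b ((e^t − 1) + (1 − a^b/β^b))`, and the coefficients of
`(e^t − 1)^l` are `l! S(p, l) / p!`.
-/

open Finset
open scoped Nat

lemma C_mul_sub_C_pow {R : Type*} [CommRing R] (B A : R) (f : PowerSeries R) (j : ℕ) :
    (PowerSeries.C B * f - PowerSeries.C A) ^ j = ∑ m ∈ range (j + 1),
      PowerSeries.C ((j.choose m : R) * (-1) ^ (j - m) * A ^ (j - m) * B ^ m) * f ^ m := by
  rw [sub_eq_add_neg, ← map_neg, add_pow]
  refine sum_congr rfl fun m _ => ?_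
  rw [mul_pow, ← map_pow, ← map_pow, ← map_natCast PowerSeries.C, neg_pow]
  simp only [map_mul]
  ring

lemma factorial_mul_coeff_X_pow_mul {R : Type*} [CommSemiring R] (f : PowerSeries R) (k n : ℕ) :
    (n ! : R) * PowerSeries.coeff n (PowerSeries.X ^ k * f)
      = k ! * n.choose k * ((n - k)! * PowerSeries.coeff (n - k) f) := by
  rw [PowerSeries.coeff_X_pow_mul']
  split_ifs with hkn
  · rw [← Nat.choose_mul_factorial_mul_factorial hkn]
    push_cast
    ring
  · simp [Nat.choose_eq_zero_of_lt (not_le.mp hkn)]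

lemma C_mul_exp_sub_C_ne_zero {K : Type*} [Field K] [CharZero K] {B : K} (hB : B ≠ 0) (A : K) :
    PowerSeries.C B * PowerSeries.exp K - PowerSeries.C A ≠ 0 := by
  intro h
  exact hB (by simpa [PowerSeries.coeff_exp] using congrArg (PowerSeries.coeff 1) h)

lemma factorial_mul_coeff_exp_sub_one_pow (p l : ℕ) :
    (p ! : ℂ) * PowerSeries.coeff p ((PowerSeries.exp ℂ - 1) ^ l) = l ! * stirling2 p l := by
  have hexp := C_mul_sub_C_pow 1 1 (PowerSeries.exp ℂ) l
  simp only [map_one, one_mul, one_pow, mul_one] at hexp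
  rw [hexp, stirling2, mul_inv_cancel_left₀ (by exact_mod_cast l.factorial_ne_zero), map_sum,
    Finset.mul_sum]
  refine sum_congr rfl fun i _ => ?_
  rw [PowerSeries.exp_pow_eq_rescale_exp, PowerSeries.coeff_C_mul, PowerSeries.coeff_rescale,
    PowerSeries.coeff_exp]
  have hp : (p ! : ℂ) ≠ 0 := by exact_mod_cast p.factorial_ne_zero
  simp only [eq_ratCast]
  push_cast
  field_simp

lemma factorial_mul_coeff_C_mul_exp_sub_C_pow {B : ℂ} (hB : B ≠ 0) (A : ℂ) (p i : ℕ) :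
    (p ! : ℂ) * PowerSeries.coeff p ((PowerSeries.C B * PowerSeries.exp ℂ - PowerSeries.C A) ^ i)
      = B ^ i * ∑ l ∈ range (i + 1),
          (i ! : ℂ) / ((i - l)! : ℂ) * (1 - A / B) ^ (i - l) * stirling2 p l := by
  have hsplit : PowerSeries.C B * PowerSeries.exp ℂ - PowerSeries.C A
      = PowerSeries.C B * ((PowerSeries.exp ℂ - 1) + PowerSeries.C (1 - A / B)) := by
    rw [mul_add, ← map_mul, mul_one_sub, mul_div_cancel₀ _ hB]
    simp only [map_sub]
    ring
  rw [hsplit, mul_pow, ← map_pow, PowerSeries.coeff_C_mul, mul_left_comm]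
  congr 1
  rw [add_pow, map_sum, Finset.mul_sum]
  refine sum_congr rfl fun l hl => ?_
  rw [← map_pow PowerSeries.C, ← map_natCast PowerSeries.C, mul_assoc, ← map_mul,
    PowerSeries.coeff_mul_C, ← mul_assoc, factorial_mul_coeff_exp_sub_one_pow,
    ← Nat.choose_mul_factorial_mul_factorial (Nat.lt_succ_iff.mp (mem_range.mp hl))]
  have hil : ((i - l)! : ℂ) ≠ 0 := by exact_mod_cast (i - l).factorial_ne_zero
  push_cast
  field_simp

lemma map_evalRingHom_expX (x : ℂ) :
    PowerSeries.map (evalRingHom x) expX = PowerSeries.rescale x (PowerSeries.exp ℂ) := by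
  ext n
  simp [expX, PowerSeries.coeff_rescale, PowerSeries.coeff_exp, mul_comm]

lemma factorial_mul_coeff_map_evalRingHom_egf (Y : ℕ → ℂ[X]) (x : ℂ) (n : ℕ) :
    (n ! : ℂ) * PowerSeries.coeff n (PowerSeries.map (evalRingHom x) (egf Y)) = (Y n).eval x := by
  simp [egf, n.factorial_ne_zero]

lemma sum_mul_eval_eq_factorial_mul_coeff_sum (Y : ℕ → ℂ[X]) (s : Finset ℕ) (w x : ℕ → ℂ)
    (n : ℕ) :
    ∑ m ∈ s, w m * (Y n).eval (x m) = (n ! : ℂ) * PowerSeries.coeff n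
      (∑ m ∈ s, PowerSeries.C (w m) * PowerSeries.map (evalRingHom (x m)) (egf Y)) := by
  rw [map_sum, Finset.mul_sum]
  refine sum_congr rfl fun m _ => ?_
  rw [PowerSeries.coeff_C_mul, mul_left_comm, factorial_mul_coeff_map_evalRingHom_egf]

namespace ApostolFamilyC

variable {k : ℕ} {B A : ℂ} {Y : ℕ → ℂ[X]}

lemma mul_map_evalRingHom_egf (hY : ApostolFamilyC k 1 B A Y) (x : ℂ) :
    (PowerSeries.C B * PowerSeries.exp ℂ - PowerSeries.C A) *
        PowerSeries.map (evalRingHom x) (egf Y)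
      = PowerSeries.C ((2 : ℂ) ^ ((1 : ℤ) - k)) * PowerSeries.X ^ k *
          PowerSeries.rescale x (PowerSeries.exp ℂ) := by
  simpa [ApostolFamilyC, map_evalRingHom_expX] using
    congrArg (PowerSeries.map (evalRingHom x)) hY

lemma sum_choose_mul_map_evalRingHom_egf (hY : ApostolFamilyC k 1 B A Y) (hB : B ≠ 0) (i : ℕ) :
    ∑ m ∈ range (i + 1 + 1),
        PowerSeries.C (((i + 1).choose m : ℂ) * (-1) ^ (i + 1 - m) * A ^ (i + 1 - m) * B ^ m) *
          PowerSeries.map (evalRingHom (m : ℂ)) (egf Y)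
      = PowerSeries.C ((2 : ℂ) ^ ((1 : ℤ) - k)) * PowerSeries.X ^ k *
          (PowerSeries.C B * PowerSeries.exp ℂ - PowerSeries.C A) ^ i := by
  refine mul_left_cancel₀ (C_mul_exp_sub_C_ne_zero hB A) ?_
  rw [mul_left_comm _ _ (_ ^ i), ← pow_succ', C_mul_sub_C_pow, Finset.mul_sum, Finset.mul_sum]
  refine sum_congr rfl fun m _ => ?_
  rw [mul_left_comm, hY.mul_map_evalRingHom_egf, ← PowerSeries.exp_pow_eq_rescale_exp]
  ring

end ApostolFamilyC

theorem apostol_pairing_formula_general (k : ℕ) (a b : ℝ) (β : ℂ)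
    (hβ : β ≠ 0)
    (Y : ℕ → Polynomial ℂ) (hY : ApostolFamily k 1 a b β Y)
    (j n : ℕ) (hj : 1 ≤ j) :
    ∑ m ∈ Finset.range (j + 1),
        (j.choose m : ℂ) * (-1 : ℂ) ^ (j - m) * (((a ^ b : ℝ) : ℂ)) ^ (j - m) *
          (β ^ (b : ℂ)) ^ m * (Y n).eval (m : ℂ)
      = (β ^ (b : ℂ)) ^ (j - 1) * (k.factorial : ℂ) / (2 : ℂ) ^ ((k : ℤ) - 1) *
          (n.choose k : ℂ) *
          ∑ l ∈ Finset.range j,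
            ((j - 1).factorial : ℂ) / ((j - 1 - l).factorial : ℂ) *
              (1 - ((a ^ b : ℝ) : ℂ) / (β ^ (b : ℂ))) ^ (j - 1 - l) *
              stirling2 (n - k) l := by
  obtain ⟨i, rfl⟩ : ∃ i, j = i + 1 := ⟨j - 1, by omega⟩
  have hB : β ^ (b : ℂ) ≠ 0 := by simp [Complex.cpow_eq_zero_iff, hβ]
  have h2 : (2 : ℂ) ^ ((1 : ℤ) - k) = ((2 : ℂ) ^ ((k : ℤ) - 1))⁻¹ := by
    rw [← zpow_neg, neg_sub]
  rw [sum_mul_eval_eq_factorial_mul_coeff_sum,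
    ApostolFamilyC.sum_choose_mul_map_evalRingHom_egf hY hB, mul_assoc, PowerSeries.coeff_C_mul,
    mul_left_comm, factorial_mul_coeff_X_pow_mul,
    factorial_mul_coeff_C_mul_exp_sub_C_pow hB, h2, Nat.add_sub_cancel]
  ring

/-- For `j ≥ 1` and `n ≥ k`:
`∑_{m=0}^{j} C(j,m)(−1)^{j−m} a^{b(j−m)} β^{bm} Y_{n,β}(m;k,a,b)
  = (β^{b(j−1)} k!/2^{k−1}) C(n,k) ∑_{l=0}^{j−1} ((j−1)!/(j−l−1)!)(1 − a^b/β^b)^{j−l−1} S(n−k,l)`. -/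
theorem apostol_pairing_formula (k : ℕ) (a b : ℝ) (β : ℂ)
    (ha : 0 < a) (hb : 0 < b) (hβ : β ≠ 0)
    (Y : ℕ → Polynomial ℂ) (hY : ApostolFamily k 1 a b β Y)
    (j n : ℕ) (hj : 1 ≤ j) (hn : k ≤ n) :
    ∑ m ∈ Finset.range (j + 1),
        (j.choose m : ℂ) * (-1 : ℂ) ^ (j - m) * (((a ^ b : ℝ) : ℂ)) ^ (j - m) *
          (β ^ (b : ℂ)) ^ m * (Y n).eval (m : ℂ)
      = (β ^ (b : ℂ)) ^ (j - 1) * (k.factorial : ℂ) / (2 : ℂ) ^ ((k : ℤ) - 1) *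
          (n.choose k : ℂ) *
          ∑ l ∈ Finset.range j,
            ((j - 1).factorial : ℂ) / ((j - 1 - l).factorial : ℂ) *
              (1 - ((a ^ b : ℝ) : ℂ) / (β ^ (b : ℂ))) ^ (j - 1 - l) *
              stirling2 (n - k) l :=
  apostol_pairing_formula_general k a b β hβ Y hY j n hj
end

section
/- For all integers v ≥ 1 and n ≥ k, the following identity of polynomials in x holds: Y_{n,β}^{(v)}(x+1;k,a,b) = ((n)_k/(2^{k−1}·β^b))·Y_{n−k,β}^{(v−1)}(x;k,a,b) + (a^b/β^b)·Y_{n,β}^{(v)}(x;k,a,b). -/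
open Polynomial

/-!
Substituting `x ↦ x + 1` turns `e^{xt}` into `e^t e^{xt}` and fixes `βᵇeᵗ − aᵇ`, so the
generating function of `Y_n(x + 1)` is `eᵗ` times that of `Y_n`. Cancelling one factor
`βᵇeᵗ − aᵇ` (power series over the domain `ℂ[x]`) between the identities of orders `v` and
`v − 1` gives `(βᵇeᵗ − aᵇ) · ∑ Y_n tⁿ/n! = 2^{1−k} tᵏ · ∑ Y'_n tⁿ/n!`. Writing
`βᵇeᵗ = (βᵇeᵗ − aᵇ) + aᵇ` and comparing coefficients of `tⁿ` yields the identity, since the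
coefficient of `tⁿ` in `tᵏ · ∑ Y'_m tᵐ/m!` is `(n)_k · Y'_{n−k}/n!` (both vanish when `n < k`).
-/

lemma PowerSeries.map_rescale {R S : Type*} [CommSemiring R] [CommSemiring S] (f : R →+* S)
    (a : R) (g : PowerSeries R) :
    PowerSeries.map f (PowerSeries.rescale a g)
      = PowerSeries.rescale (f a) (PowerSeries.map f g) := by
  ext n
  simp [PowerSeries.coeff_rescale]

lemma expX_eq_rescale_exp : expX = PowerSeries.rescale X (PowerSeries.exp ℂ[X]) := by
  ext n
  simp only [expX, PowerSeries.coeff_mk, PowerSeries.coeff_rescale, PowerSeries.coeff_exp,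
    Polynomial.algebraMap_apply, eq_ratCast, smul_eq_C_mul]
  push_cast
  rw [one_div, mul_comm]

lemma map_compRingHom_X_add_one_expX :
    PowerSeries.map (compRingHom (X + 1)) expX = PowerSeries.exp ℂ[X] * expX := by
  rw [expX_eq_rescale_exp, PowerSeries.map_rescale, PowerSeries.map_exp, coe_compRingHom_apply,
    X_comp, ← PowerSeries.exp_mul_exp_eq_exp_add, PowerSeries.rescale_one, RingHom.id_apply,
    ← expX_eq_rescale_exp, mul_comm]

lemma map_compRingHom_egf (q : ℂ[X]) (Y : ℕ → ℂ[X]) :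
    PowerSeries.map (compRingHom q) (egf Y) = egf fun n => (Y n).comp q := by
  ext n
  simp [egf, smul_comp]

lemma factorial_smul_coeff_egf (Y : ℕ → ℂ[X]) (n : ℕ) :
    (n.factorial : ℂ) • PowerSeries.coeff n (egf Y) = Y n := by
  simp [egf, smul_smul, Nat.factorial_ne_zero]

lemma factorial_smul_coeff_X_pow_mul_egf (Y : ℕ → ℂ[X]) (k n : ℕ) :
    (n.factorial : ℂ) • PowerSeries.coeff n (PowerSeries.X ^ k * egf Y)
      = (n.descFactorial k : ℂ) • Y (n - k) := by
  rw [PowerSeries.coeff_X_pow_mul']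
  split_ifs with hkn
  · rw [← Nat.factorial_mul_descFactorial hkn, Nat.cast_mul, mul_comm, mul_smul,
      factorial_smul_coeff_egf]
  · simp [Nat.descFactorial_eq_zero_iff_lt.mpr (not_le.mp hkn)]

noncomputable def apostolDenom (B A : ℂ) : PowerSeries ℂ[X] :=
  PowerSeries.C (C B) * PowerSeries.exp ℂ[X] - PowerSeries.C (C A)

lemma apostolDenom_ne_zero {B : ℂ} (A : ℂ) (hB : B ≠ 0) : apostolDenom B A ≠ 0 := by
  intro h
  have h1 := congrArg (PowerSeries.coeff 1) h
  simp [apostolDenom] at h1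
  exact hB h1

lemma map_compRingHom_apostolDenom (q : ℂ[X]) (B A : ℂ) :
    PowerSeries.map (compRingHom q) (apostolDenom B A) = apostolDenom B A := by
  simp [apostolDenom, PowerSeries.map_exp]

namespace ApostolFamilyC

variable {k v : ℕ} {B A : ℂ} {Y Y' : ℕ → ℂ[X]}

lemma iff_apostolDenom : ApostolFamilyC k v B A Y ↔
    apostolDenom B A ^ v * egf Y
      = (PowerSeries.C (C ((2 : ℂ) ^ ((1 : ℤ) - k))) * PowerSeries.X ^ k) ^ v * expX :=
  Iff.rfl

theorem egf_comp_X_add_one (hB : B ≠ 0) (hY : ApostolFamilyC k v B A Y) :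
    egf (fun n => (Y n).comp (X + 1)) = PowerSeries.exp ℂ[X] * egf Y := by
  rw [iff_apostolDenom] at hY
  have hmap := congrArg (PowerSeries.map (compRingHom (X + 1))) hY
  simp only [map_mul, map_pow, map_compRingHom_apostolDenom, map_compRingHom_egf,
    PowerSeries.map_C, PowerSeries.map_X, coe_compRingHom_apply, C_comp,
    map_compRingHom_X_add_one_expX] at hmap
  refine mul_left_cancel₀ (pow_ne_zero v (apostolDenom_ne_zero A hB)) ?_
  rw [hmap, mul_left_comm, ← hY, mul_left_comm]

theorem apostolDenom_mul_egf (hB : B ≠ 0) (hY : ApostolFamilyC k (v + 1) B A Y)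
    (hY' : ApostolFamilyC k v B A Y') :
    apostolDenom B A * egf Y
      = PowerSeries.C (C ((2 : ℂ) ^ ((1 : ℤ) - k))) * PowerSeries.X ^ k * egf Y' := by
  rw [iff_apostolDenom] at hY hY'
  refine mul_left_cancel₀ (pow_ne_zero v (apostolDenom_ne_zero A hB)) ?_
  rw [← mul_assoc, ← pow_succ, hY, mul_left_comm, hY', pow_succ']
  ring

theorem smul_comp_X_add_one (hB : B ≠ 0) (hY : ApostolFamilyC k (v + 1) B A Y)
    (hY' : ApostolFamilyC k v B A Y') (n : ℕ) :
    B • (Y n).comp (X + 1)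
      = ((2 : ℂ) ^ ((1 : ℤ) - k) * n.descFactorial k) • Y' (n - k) + A • Y n := by
  have hseries : PowerSeries.C (C B) * egf (fun n => (Y n).comp (X + 1))
      = PowerSeries.C (C ((2 : ℂ) ^ ((1 : ℤ) - k))) * (PowerSeries.X ^ k * egf Y')
        + PowerSeries.C (C A) * egf Y := by
    rw [egf_comp_X_add_one hB hY, ← mul_assoc, ← mul_assoc, ← apostolDenom_mul_egf hB hY hY',
      apostolDenom]
    ring
  have hcoeff := congrArg (fun f => (n.factorial : ℂ) • PowerSeries.coeff n f) hseries
  simp only [map_add, PowerSeries.coeff_C_mul, ← smul_eq_C_mul, smul_add] at hcoeff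
  rw [smul_comm _ B, smul_comm _ (2 ^ _ : ℂ), smul_comm _ A, factorial_smul_coeff_egf,
    factorial_smul_coeff_egf, factorial_smul_coeff_X_pow_mul_egf] at hcoeff
  rw [hcoeff, mul_smul]

end ApostolFamilyC

theorem apostol_shift_identity_general (k v : ℕ) (a b : ℝ) (β : ℂ)
    (hβ : β ≠ 0) (hv : 1 ≤ v)
    (Y Y' : ℕ → Polynomial ℂ)
    (hY : ApostolFamily k v a b β Y) (hY' : ApostolFamily k (v - 1) a b β Y')
    (n : ℕ) :
    (Y n).comp (Polynomial.X + 1)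
      = Polynomial.C ((n.descFactorial k : ℂ) /
            ((2 : ℂ) ^ ((k : ℤ) - 1) * β ^ (b : ℂ))) * Y' (n - k)
        + Polynomial.C (((a ^ b : ℝ) : ℂ) / β ^ (b : ℂ)) * Y n := by
  obtain ⟨w, rfl⟩ := Nat.exists_eq_add_of_le' hv
  unfold ApostolFamily at hY hY'
  have hB : β ^ (b : ℂ) ≠ 0 := Complex.cpow_ne_zero_iff.mpr (Or.inl hβ)
  rw [← inv_smul_smul₀ hB ((Y n).comp (X + 1)),
    ApostolFamilyC.smul_comp_X_add_one hB hY hY' n, smul_add, smul_smul, smul_smul,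
    smul_eq_C_mul, smul_eq_C_mul, show (1 : ℤ) - k = -(k - 1) by ring, zpow_neg]
  congr 3 <;> field_simp

/-- For `v ≥ 1` and `n ≥ k`:
`Y_{n,β}^{(v)}(x+1;k,a,b) = ((n)_k/(2^{k−1} β^b))·Y_{n−k,β}^{(v−1)}(x;k,a,b)
  + (a^b/β^b)·Y_{n,β}^{(v)}(x;k,a,b)`. -/
theorem apostol_shift_identity (k v : ℕ) (a b : ℝ) (β : ℂ)
    (ha : 0 < a) (hb : 0 < b) (hβ : β ≠ 0) (hv : 1 ≤ v)
    (Y Y' : ℕ → Polynomial ℂ)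
    (hY : ApostolFamily k v a b β Y) (hY' : ApostolFamily k (v - 1) a b β Y')
    (n : ℕ) (hn : k ≤ n) :
    (Y n).comp (Polynomial.X + 1)
      = Polynomial.C ((n.descFactorial k : ℂ) /
            ((2 : ℂ) ^ ((k : ℤ) - 1) * β ^ (b : ℂ))) * Y' (n - k)
        + Polynomial.C (((a ^ b : ℝ) : ℂ) / β ^ (b : ℂ)) * Y n :=
  apostol_shift_identity_general k v a b β hβ hv Y Y' hY hY' n
end

section
/- For all integers v ≥ 1 and n ≥ 0, the following recurrence holds as an identity of polynomials in x: Y_{n+1,β}^{(v)}(x;k,a,b) = (x − v)·Y_{n,β}^{(v)}(x;k,a,b) + (v·k/(n+1))·Y_{n+1,β}^{(v)}(x;k,a,b) − (v·a^b/(2^{1−k}·∏_{j=1}^{k}(n+j)))·Y_{n+k,β}^{(v+1)}(x;k,a,b), where the product over the empty range (k = 0) equals 1. -/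
open Polynomial

/-!
Write `F = B·eᵗ − A`, `G = 2^{1−k} tᵏ`, and `S`, `S'` for the generating series of the families
of orders `v` and `v + 1`. Since the `t`-coefficient of `F` is `B ≠ 0`, powers of `F` can be
cancelled in the domain `ℂ[x]⟦t⟧`; cancelling `F^v` between the two defining identities gives
`F·S' = G·S`. Differentiating `F^v·S = G^v·e^{xt}`, using `F' = F + A` and `t·G' = k·G`,
multiplying by `t·G·F` and cancelling `F^{v+1}` leaves
`v·G·tS + v·A·tS' + G·t(dS/dt) = v·k·G·S + x·G·tS`,
whose coefficient of `t^{n+k+1}` is the recurrence.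
-/

open scoped PowerSeries

theorem PowerSeries.mul_derivative_pow {R : Type*} [CommSemiring R] (g : R⟦X⟧) (n : ℕ) :
    g * d⁄dX R (g ^ n) = n * g ^ n * d⁄dX R g := by
  rw [derivative_pow]
  cases n with
  | zero => simp
  | succ n => rw [Nat.add_sub_cancel, pow_succ]; ring

theorem Nat.cast_factorial_add_eq_mul_prod {R : Type*} [CommSemiring R] (n k : ℕ) :
    ((n + k).factorial : R) = n.factorial * ∏ j ∈ Finset.range k, ((n : R) + j + 1) := by
  rw [← Nat.factorial_mul_ascFactorial, Nat.ascFactorial_eq_prod_range]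
  push_cast
  simp only [add_right_comm]

lemma coeff_egf (Y : ℕ → ℂ[X]) (n : ℕ) :
    PowerSeries.coeff n (egf Y) = (n.factorial : ℂ)⁻¹ • Y n :=
  PowerSeries.coeff_mk _ _

lemma expX_eq_egf : expX = egf (X ^ ·) := rfl

lemma derivative_egf (Y : ℕ → ℂ[X]) : d⁄dX ℂ[X] (egf Y) = egf (fun n => Y (n + 1)) := by
  ext1 n
  rw [PowerSeries.coeff_derivative, coeff_egf, coeff_egf, mul_comm, ← Nat.cast_succ,
    ← nsmul_eq_mul, ← Nat.cast_smul_eq_nsmul ℂ, smul_smul, Nat.factorial_succ, Nat.cast_mul,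
    mul_inv, ← mul_assoc, mul_inv_cancel₀ (Nat.cast_ne_zero.2 n.succ_ne_zero), one_mul]

lemma derivative_expX : d⁄dX ℂ[X] expX = PowerSeries.C X * expX := by
  ext1 n
  rw [expX_eq_egf, derivative_egf, PowerSeries.coeff_C_mul, coeff_egf, coeff_egf, pow_succ',
    mul_smul_comm]

noncomputable def apostolBase (B A : ℂ) : ℂ[X]⟦X⟧ :=
  PowerSeries.C (C B) * PowerSeries.exp ℂ[X] - PowerSeries.C (C A)

noncomputable def apostolMonomial (k : ℕ) : ℂ[X]⟦X⟧ :=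
  PowerSeries.C (C ((2 : ℂ) ^ ((1 : ℤ) - (k : ℤ)))) * PowerSeries.X ^ k

lemma apostolFamilyC_iff {k v : ℕ} {B A : ℂ} {Y : ℕ → ℂ[X]} :
    ApostolFamilyC k v B A Y ↔ apostolBase B A ^ v * egf Y = apostolMonomial k ^ v * expX :=
  Iff.rfl

lemma apostolBase_ne_zero {B : ℂ} (A : ℂ) (hB : B ≠ 0) : apostolBase B A ≠ 0 := by
  intro h
  have h1 := congrArg (PowerSeries.coeff 1) h
  simp [apostolBase, hB] at h1

lemma derivative_apostolBase (B A : ℂ) :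
    d⁄dX ℂ[X] (apostolBase B A) = apostolBase B A + PowerSeries.C (C A) := by
  simp [apostolBase, PowerSeries.derivative_exp]

lemma X_mul_derivative_apostolMonomial (k : ℕ) :
    PowerSeries.X * d⁄dX ℂ[X] (apostolMonomial k) = (k : ℂ[X]⟦X⟧) * apostolMonomial k := by
  simp only [apostolMonomial, Derivation.leibniz, smul_eq_mul, PowerSeries.derivative_C,
    mul_zero, add_zero]
  rw [mul_left_comm, PowerSeries.mul_derivative_pow, PowerSeries.derivative_X]
  ring

lemma coeff_add_apostolMonomial_mul (k n : ℕ) (f : ℂ[X]⟦X⟧) :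
    PowerSeries.coeff (n + k) (apostolMonomial k * f)
      = C ((2 : ℂ) ^ ((1 : ℤ) - (k : ℤ))) * PowerSeries.coeff n f := by
  rw [apostolMonomial, mul_assoc, PowerSeries.coeff_C_mul, PowerSeries.coeff_X_pow_mul]

namespace ApostolFamilyC

variable {k v : ℕ} {B A : ℂ} {Y Y' : ℕ → ℂ[X]}

lemma apostolBase_mul_egf (hB : B ≠ 0) (hY : ApostolFamilyC k v B A Y)
    (hY' : ApostolFamilyC k (v + 1) B A Y') :
    apostolBase B A * egf Y' = apostolMonomial k * egf Y := by
  rw [apostolFamilyC_iff] at hY hY'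
  apply mul_left_cancel₀ (pow_ne_zero v (apostolBase_ne_zero A hB))
  linear_combination hY' - apostolMonomial k * hY

lemma derivative_relation (hB : B ≠ 0) (hY : ApostolFamilyC k v B A Y)
    (hY' : ApostolFamilyC k (v + 1) B A Y') :
    (v : ℂ[X]⟦X⟧) * (apostolMonomial k * (PowerSeries.X * egf Y))
        + (v : ℂ[X]⟦X⟧) * (PowerSeries.C (C A) * (PowerSeries.X * egf Y'))
        + apostolMonomial k * (PowerSeries.X * egf (fun n => Y (n + 1)))
      = (v : ℂ[X]⟦X⟧) * (k : ℂ[X]⟦X⟧) * (apostolMonomial k * egf Y)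
        + PowerSeries.C X * (apostolMonomial k * (PowerSeries.X * egf Y)) := by
  have hstep := hY.apostolBase_mul_egf hB hY'
  rw [apostolFamilyC_iff] at hY
  have hd := congrArg (d⁄dX ℂ[X]) hY
  simp only [Derivation.leibniz, smul_eq_mul, derivative_egf, derivative_expX] at hd
  set F := apostolBase B A
  set G := apostolMonomial k
  have hF := PowerSeries.mul_derivative_pow F v
  have hG := PowerSeries.mul_derivative_pow G v
  apply mul_left_cancel₀ (pow_ne_zero (v + 1) (apostolBase_ne_zero A hB))
  linear_combination PowerSeries.X * G * F * hd - PowerSeries.X * G * egf Y * hF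
    - v * PowerSeries.X * G * egf Y * F ^ v * derivative_apostolBase B A
    + PowerSeries.X * F * expX * hG + v * F * expX * G ^ v * X_mul_derivative_apostolMonomial k
    + v * PowerSeries.C (C A) * PowerSeries.X * F ^ v * hstep
    - (v * k * G * F + PowerSeries.C X * G * PowerSeries.X * F) * hY

lemma coeff_derivative_relation (hB : B ≠ 0) (hY : ApostolFamilyC k v B A Y)
    (hY' : ApostolFamilyC k (v + 1) B A Y') (n : ℕ) :
    (v : ℂ[X]) * (C ((2 : ℂ) ^ ((1 : ℤ) - (k : ℤ))) * ((n.factorial : ℂ)⁻¹ • Y n))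
        + (v : ℂ[X]) * (C A * (((n + k).factorial : ℂ)⁻¹ • Y' (n + k)))
        + C ((2 : ℂ) ^ ((1 : ℤ) - (k : ℤ))) * ((n.factorial : ℂ)⁻¹ • Y (n + 1))
      = (v : ℂ[X]) * (k : ℂ[X])
          * (C ((2 : ℂ) ^ ((1 : ℤ) - (k : ℤ))) * (((n + 1).factorial : ℂ)⁻¹ • Y (n + 1)))
        + X * (C ((2 : ℂ) ^ ((1 : ℤ) - (k : ℤ))) * ((n.factorial : ℂ)⁻¹ • Y n)) := by
  have h := congrArg (PowerSeries.coeff (n + 1 + k)) (hY.derivative_relation hB hY')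
  have hX : PowerSeries.coeff (n + 1 + k) (PowerSeries.X * egf Y')
      = PowerSeries.coeff (n + k) (egf Y') := by
    rw [Nat.add_right_comm, PowerSeries.coeff_succ_X_mul]
  simp only [← map_natCast (PowerSeries.C (R := ℂ[X])), ← map_mul, map_add,
    PowerSeries.coeff_C_mul, coeff_add_apostolMonomial_mul, PowerSeries.coeff_succ_X_mul, hX,
    coeff_egf] at h
  simpa only [map_mul] using h

theorem recurrence (hB : B ≠ 0)
    (hY : ApostolFamilyC k v B A Y) (hY' : ApostolFamilyC k (v + 1) B A Y') (n : ℕ) :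
    Y (n + 1)
      = (X - C (v : ℂ)) * Y n + C ((v : ℂ) * (k : ℂ) / ((n : ℂ) + 1)) * Y (n + 1)
        - C ((v : ℂ) * A / ((2 : ℂ) ^ ((1 : ℤ) - (k : ℤ)) *
            ∏ j ∈ Finset.range k, ((n : ℂ) + (j : ℂ) + 1))) * Y' (n + k) := by
  have h := hY.coeff_derivative_relation hB hY' n
  rw [Nat.cast_factorial_add_eq_mul_prod, Nat.factorial_succ] at h
  have hfact : (n.factorial : ℂ) ≠ 0 := Nat.cast_ne_zero.2 n.factorial_ne_zero
  have hc : (2 : ℂ) ^ ((1 : ℤ) - (k : ℤ)) ≠ 0 := zpow_ne_zero _ two_ne_zero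
  have hprod : ∏ j ∈ Finset.range k, ((n : ℂ) + (j : ℂ) + 1) ≠ 0 :=
    Finset.prod_ne_zero_iff.2 fun j _ => by exact_mod_cast Nat.succ_ne_zero (n + j)
  simp only [← Polynomial.C_eq_natCast, Polynomial.C_mul', Polynomial.smul_C, smul_eq_mul,
    smul_smul, mul_smul_comm, sub_mul] at h ⊢
  linear_combination (norm := match_scalars <;> (push_cast; field_simp; ring))
    ((n.factorial : ℂ) / (2 : ℂ) ^ ((1 : ℤ) - (k : ℤ))) • h

end ApostolFamilyC

theorem apostol_recurrence_general (k v : ℕ) (a b : ℝ) (β : ℂ)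
    (hβ : β ≠ 0)
    (Y Y' : ℕ → Polynomial ℂ)
    (hY : ApostolFamily k v a b β Y) (hY' : ApostolFamily k (v + 1) a b β Y')
    (n : ℕ) :
    Y (n + 1)
      = (Polynomial.X - Polynomial.C (v : ℂ)) * Y n
        + Polynomial.C ((v : ℂ) * (k : ℂ) / ((n : ℂ) + 1)) * Y (n + 1)
        - Polynomial.C ((v : ℂ) * ((a ^ b : ℝ) : ℂ) /
            ((2 : ℂ) ^ ((1 : ℤ) - (k : ℤ)) *
              ∏ j ∈ Finset.range k, ((n : ℂ) + (j : ℂ) + 1))) * Y' (n + k) :=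
  ApostolFamilyC.recurrence (Complex.cpow_ne_zero_iff.2 (.inl hβ)) hY hY' n

/-- Recurrence: for `v ≥ 1` and all `n ≥ 0`,
`Y_{n+1,β}^{(v)} = (x − v)·Y_{n,β}^{(v)} + (vk/(n+1))·Y_{n+1,β}^{(v)}
  − (v·a^b/(2^{1−k}·∏_{j=1}^{k}(n+j)))·Y_{n+k,β}^{(v+1)}`. -/
theorem apostol_recurrence (k v : ℕ) (a b : ℝ) (β : ℂ)
    (ha : 0 < a) (hb : 0 < b) (hβ : β ≠ 0) (hv : 1 ≤ v)
    (Y Y' : ℕ → Polynomial ℂ)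
    (hY : ApostolFamily k v a b β Y) (hY' : ApostolFamily k (v + 1) a b β Y')
    (n : ℕ) :
    Y (n + 1)
      = (Polynomial.X - Polynomial.C (v : ℂ)) * Y n
        + Polynomial.C ((v : ℂ) * (k : ℂ) / ((n : ℂ) + 1)) * Y (n + 1)
        - Polynomial.C ((v : ℂ) * ((a ^ b : ℝ) : ℂ) /
            ((2 : ℂ) ^ ((1 : ℤ) - (k : ℤ)) *
              ∏ j ∈ Finset.range k, ((n : ℂ) + (j : ℂ) + 1))) * Y' (n + k) :=
  apostol_recurrence_general k v a b β hβ Y Y' hY hY' n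
end
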